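/- For every real x ≥ 1 and every integer k ≥ 0, the function L(x;k) = Σ_{n=1}^{⌊x⌋} ( (log(n/x))^{2k}/((2k)!·√n) - (log(n/x))^{2k+2}/((2k+2)!·4·√n) ) is nonnegative. -/

import Mathlib

/-!
Write the summand as `term k x t = R k (log x - log t) / √t` at `t = n`. It has the explicit
primitive `√t * Q k (log x - log t)`, which vanishes at `t = x`, so `∫ t in 1..x, term = -Q (log x)`.
The derivative of `term` has the sign of `-q (log x - log t)` for a cubic `q` that is concave on
`[0, ∞)` and nonnegative at `0`, so `term` first increases and then decreases on `[1, x]`. For such a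
unimodal function the sum over `1, …, ⌊x⌋` is at least `term 1 + ∫ t in 1..x, term` minus the
maximum of `term`, which is at most `(log x) ^ (2k) / (2k)!`; and `term 1 = R (log x)`, while
`R (log x) - Q (log x)` exceeds that bound.
-/

open Real Set MeasureTheory intervalIntegral

section SumIntegral

variable {f : ℝ → ℝ}

theorem integral_le_sum_Icc_floor_of_antitoneOn {a : ℕ} {x : ℝ} (hax : (a : ℝ) ≤ x)
    (hf : AntitoneOn f (Icc a x)) (hfloor : 0 ≤ f ⌊x⌋₊) :
    ∫ t in a..x, f t ≤ ∑ n ∈ Finset.Icc a ⌊x⌋₊, f n := by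
  set N := ⌊x⌋₊
  have haN : a ≤ N := Nat.le_floor hax
  have haN' : (a : ℝ) ≤ N := by exact_mod_cast haN
  have hNx : (N : ℝ) ≤ x := Nat.floor_le ((Nat.cast_nonneg a).trans hax)
  have hint : ∀ c ∈ Icc (a : ℝ) x, ∀ d ∈ Icc (a : ℝ) x, IntervalIntegrable f volume c d :=
    fun c hc d hd => (hf.mono (uIcc_subset_Icc hc hd)).intervalIntegrable
  have head : ∫ t in a..N, f t ≤ ∑ n ∈ Finset.Ico a N, f n :=
    (hf.mono (Icc_subset_Icc_right hNx)).integral_le_sum_Ico haN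
  have tail : ∫ t in N..x, f t ≤ f N :=
    calc ∫ t in N..x, f t ≤ ∫ _ in N..x, f N :=
          integral_mono_on hNx (hint _ ⟨haN', hNx⟩ _ ⟨haN'.trans hNx, le_rfl⟩)
            intervalIntegrable_const fun t ht => hf ⟨haN', hNx⟩ ⟨haN'.trans ht.1, ht.2⟩ ht.1
      _ = (x - N) * f N := by simp
      _ ≤ f N := mul_le_of_le_one_left hfloor (by linarith [Nat.lt_floor_add_one x])
  rw [← integral_add_adjacent_intervals (hint _ ⟨le_rfl, hax⟩ _ ⟨haN', hNx⟩)
    (hint _ ⟨haN', hNx⟩ _ ⟨hax, le_rfl⟩), ← Finset.Ico_add_one_right_eq_Icc,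
    Finset.sum_Ico_succ_top haN]
  linarith

theorem add_integral_le_sum_Icc_of_monotoneOn {m : ℕ} (hm : 1 ≤ m) (hf : MonotoneOn f (Icc 1 m)) :
    f 1 + ∫ t in 1..m, f t ≤ ∑ n ∈ Finset.Icc 1 m, f n := by
  have h := MonotoneOn.integral_le_sum_Ico (a := 1) (b := m) hm (by simpa using hf)
  rw [Finset.sum_Ico_add' (fun n : ℕ => f n)] at h
  rw [Finset.Icc_eq_cons_Ioc hm, Finset.sum_cons, ← Finset.Icc_add_one_left_eq_Ioc,
    ← Finset.Ico_add_one_right_eq_Icc]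
  simpa using h

/-- The peak of `f` lies in `[m, m + 1]`, the one unit interval whose integral is not dominated by
a term of the sum; `M` pays for it. -/
theorem add_integral_le_sum_Icc_floor_add {x M : ℝ} {m : ℕ} (hmx : (m : ℝ) + 1 ≤ x)
    (hmono : MonotoneOn f (Icc 1 m)) (hanti : AntitoneOn f (Icc (m + 1) x))
    (hM : ∀ t ∈ Icc 1 x, f t ≤ M) (hfloor : 0 ≤ f ⌊x⌋₊)
    (hint : IntervalIntegrable f volume 1 x) :
    f 1 + ∫ t in 1..x, f t ≤ ∑ n ∈ Finset.Icc 1 ⌊x⌋₊, f n + M := by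
  rcases Nat.eq_zero_or_pos m with rfl | hm
  · simp only [Nat.cast_zero, zero_add] at hmx hanti
    have hsum := integral_le_sum_Icc_floor_of_antitoneOn (a := 1) (by simpa using hmx)
      (by simpa using hanti) hfloor
    simp only [Nat.cast_one] at hsum
    linarith [hM 1 ⟨le_rfl, hmx⟩]
  have h1m : (1 : ℝ) ≤ m := by exact_mod_cast hm
  have hsub : ∀ c ∈ Icc 1 x, ∀ d ∈ Icc 1 x, IntervalIntegrable f volume c d :=
    fun c hc d hd => hint.mono_set (by
      rw [uIcc_of_le (by linarith : (1 : ℝ) ≤ x)]; exact uIcc_subset_Icc hc hd)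
  have hpeak : ∫ t in m..(m + 1 : ℝ), f t ≤ M :=
    calc ∫ t in m..(m + 1 : ℝ), f t ≤ ∫ _ in m..(m + 1 : ℝ), M :=
          integral_mono_on (by linarith) (hsub _ ⟨h1m, by linarith⟩ _ ⟨by linarith, hmx⟩)
            intervalIntegrable_const fun t ht => hM t ⟨h1m.trans ht.1, ht.2.trans hmx⟩
      _ = M := by simp
  have hleft := add_integral_le_sum_Icc_of_monotoneOn hm hmono
  have hright := integral_le_sum_Icc_floor_of_antitoneOn (a := m + 1) (by exact_mod_cast hmx)
    (by exact_mod_cast hanti) hfloor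
  have hsplit := Finset.sum_Ioc_consecutive (fun n : ℕ => f n) (Nat.zero_le m)
    (Nat.le_floor (by linarith) : m ≤ ⌊x⌋₊)
  simp only [← Finset.Icc_add_one_left_eq_Ioc, zero_add] at hsplit
  push_cast at hright
  rw [← integral_add_adjacent_intervals (hsub _ ⟨le_rfl, by linarith⟩ _ ⟨h1m, by linarith⟩)
      (hsub _ ⟨h1m, by linarith⟩ _ ⟨by linarith, le_rfl⟩),
    ← integral_add_adjacent_intervals (hsub _ ⟨h1m, by linarith⟩ _ ⟨by linarith, hmx⟩)
      (hsub _ ⟨by linarith, hmx⟩ _ ⟨by linarith, le_rfl⟩)]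
  linarith

end SumIntegral

theorem hasDerivAt_pow_succ_div_factorial (n : ℕ) (u : ℝ) :
    HasDerivAt (fun u : ℝ => u ^ (n + 1) / (n + 1).factorial) (u ^ n / n.factorial) u := by
  refine ((hasDerivAt_pow (n + 1) u).div_const _).congr_deriv ?_
  rw [Nat.factorial_succ, Nat.add_sub_cancel, Nat.cast_mul]
  field_simp

theorem hasDerivAt_const_sub_log (x : ℝ) {t : ℝ} (ht : t ≠ 0) :
    HasDerivAt (fun t => log x - log t) (-t⁻¹) t := by
  simpa using (hasDerivAt_log ht).const_sub (log x)

namespace LogPowerSum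

noncomputable def R (k : ℕ) (u : ℝ) : ℝ :=
  u ^ (2 * k) / (2 * k).factorial - u ^ (2 * k + 2) / ((2 * k + 2).factorial * 4)

noncomputable def R' (k : ℕ) (u : ℝ) : ℝ :=
  2 * k * u ^ (2 * k - 1) / (2 * k).factorial - u ^ (2 * k + 1) / ((2 * k + 1).factorial * 4)

noncomputable def Q (k : ℕ) (u : ℝ) : ℝ :=
  -(u ^ (2 * k + 1) / (2 * k + 1).factorial + u ^ (2 * k + 2) / ((2 * k + 2).factorial * 2))

noncomputable def q (k : ℕ) (u : ℝ) : ℝ :=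
  2 * k / (2 * k).factorial + u / (2 * (2 * k).factorial)
    - u ^ 2 / (4 * (2 * k + 1).factorial) - u ^ 3 / (8 * (2 * k + 2).factorial)

noncomputable def term (k : ℕ) (x t : ℝ) : ℝ := R k (log x - log t) / √t

noncomputable def antideriv (k : ℕ) (x t : ℝ) : ℝ := √t * Q k (log x - log t)

variable (k : ℕ)

theorem hasDerivAt_R (u : ℝ) : HasDerivAt (R k) (R' k u) u := by
  have h₁ := (hasDerivAt_pow (2 * k) u).div_const ((2 * k).factorial : ℝ)
  have h₂ := (hasDerivAt_pow_succ_div_factorial (2 * k + 1) u).div_const 4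
  simp only [div_div] at h₂
  exact (h₁.sub h₂).congr_deriv (by simp only [R', Nat.cast_mul, Nat.cast_ofNat])

theorem hasDerivAt_Q (u : ℝ) : HasDerivAt (Q k) (Q k u / 2 - R k u) u := by
  have h₁ := hasDerivAt_pow_succ_div_factorial (2 * k) u
  have h₂ := (hasDerivAt_pow_succ_div_factorial (2 * k + 1) u).div_const 2
  simp only [div_div] at h₂
  exact (h₁.add h₂).neg.congr_deriv (by simp only [Q, R]; ring)

theorem mul_R'_add_R_div_two (u : ℝ) : u * (R' k u + R k u / 2) = u ^ (2 * k) * q k u := by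
  have hpow : (2 * k : ℝ) * (u * u ^ (2 * k - 1)) = 2 * k * u ^ (2 * k) := by
    rcases k.eq_zero_or_pos with rfl | hk
    · simp
    · rw [mul_pow_sub_one (by omega)]
  simp only [R', R, q]
  linear_combination hpow / ((2 * k).factorial : ℝ)

-- `q` is concave on `[0, ∞)` with `q 0 ≥ 0`.
theorem mul_q_le_mul_q {a b : ℝ} (ha : 0 ≤ a) (hab : a ≤ b) : a * q k b ≤ b * q k a := by
  have hb : 0 ≤ b := ha.trans hab
  have key : b * q k a - a * q k b = (b - a) * (2 * k / (2 * k).factorial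
      + a * b * (1 / (4 * (2 * k + 1).factorial) + (a + b) / (8 * (2 * k + 2).factorial))) := by
    simp only [q]; ring
  have : 0 ≤ b * q k a - a * q k b := key ▸ mul_nonneg (by linarith) (by positivity)
  linarith

theorem q_one_pos : 0 < q k 1 := by
  have h₁ : ((2 * k).factorial : ℝ) ≤ (2 * k + 1).factorial := by
    exact_mod_cast Nat.factorial_le (by omega)
  have h₂ : ((2 * k).factorial : ℝ) ≤ (2 * k + 2).factorial := by
    exact_mod_cast Nat.factorial_le (by omega)
  have : (1 : ℝ) / (4 * (2 * k + 1).factorial) ≤ 1 / (4 * (2 * k).factorial) := by gcongr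
  have : (1 : ℝ) / (8 * (2 * k + 2).factorial) ≤ 1 / (8 * (2 * k).factorial) := by gcongr
  have : (0 : ℝ) < 1 / (8 * (2 * k).factorial) := by positivity
  have : (0 : ℝ) ≤ 2 * k / (2 * k).factorial := by positivity
  simp only [q, one_pow]
  linarith [show (1 : ℝ) / (2 * (2 * k).factorial)
    = 1 / (4 * (2 * k).factorial) + 1 / (8 * (2 * k).factorial) + 1 / (8 * (2 * k).factorial) by
      field_simp; norm_num]

theorem q_nonneg_of_le {a b : ℝ} (ha : 0 < a) (hab : a ≤ b) (hb : 0 ≤ q k b) : 0 ≤ q k a :=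
  nonneg_of_mul_nonneg_right ((mul_nonneg ha.le hb).trans (mul_q_le_mul_q k ha.le hab))
    (ha.trans_le hab)

theorem q_nonneg_of_le_one {u : ℝ} (hu₀ : 0 ≤ u) (hu₁ : u ≤ 1) : 0 ≤ q k u := by
  simpa using (mul_nonneg hu₀ (q_one_pos k).le).trans (mul_q_le_mul_q k hu₀ hu₁)

theorem R_nonneg {u : ℝ} (hu₀ : 0 ≤ u) (hu₁ : u ≤ 1) : 0 ≤ R k u := by
  have hfact : ((2 * k).factorial : ℝ) ≤ (2 * k + 2).factorial * 4 := by
    have : ((2 * k).factorial : ℝ) ≤ (2 * k + 2).factorial := by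
      exact_mod_cast Nat.factorial_le (by omega)
    linarith
  have : u ^ (2 * k + 2) / ((2 * k + 2).factorial * 4) ≤ u ^ (2 * k) / (2 * k).factorial :=
    div_le_div₀ (by positivity) (pow_le_pow_of_le_one hu₀ hu₁ (by omega)) (by positivity) hfact
  simpa [R] using this

theorem R_le (u : ℝ) : R k u ≤ u ^ (2 * k) / (2 * k).factorial := by
  have : 0 ≤ u ^ (2 * k + 2) := ((even_two_mul k).add even_two).pow_nonneg u
  have : 0 ≤ u ^ (2 * k + 2) / ((2 * k + 2).factorial * 4) := by positivity
  simp only [R]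
  linarith

theorem pow_div_factorial_le_R_sub_Q {v : ℝ} (hv : 0 ≤ v) :
    v ^ (2 * k) / (2 * k).factorial ≤ R k v - Q k v := by
  have : R k v - Q k v = v ^ (2 * k) / (2 * k).factorial
      + (v ^ (2 * k + 1) / (2 * k + 1).factorial + v ^ (2 * k + 2) / ((2 * k + 2).factorial * 4)) := by
    simp only [R, Q]; ring
  rw [this]
  exact le_add_of_nonneg_right (by positivity)

variable {x : ℝ}

theorem hasDerivAt_term {t : ℝ} (ht : 0 < t) :
    HasDerivAt (term k x) (-(R' k (log x - log t) + R k (log x - log t) / 2) / (t * √t)) t := by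
  have hst : √t ≠ 0 := (sqrt_pos.2 ht).ne'
  refine (((hasDerivAt_R k _).comp t (hasDerivAt_const_sub_log x ht.ne')).div
    (hasDerivAt_sqrt ht.ne') hst).congr_deriv ?_
  simp only [Function.comp_apply]
  field_simp
  rw [sq_sqrt ht.le]
  ring

theorem hasDerivAt_antideriv {t : ℝ} (ht : 0 < t) : HasDerivAt (antideriv k x) (term k x t) t := by
  have hst : √t ≠ 0 := (sqrt_pos.2 ht).ne'
  refine ((hasDerivAt_sqrt ht.ne').mul
    ((hasDerivAt_Q k _).comp t (hasDerivAt_const_sub_log x ht.ne'))).congr_deriv ?_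
  simp only [term, Function.comp_apply]
  field_simp
  rw [sq_sqrt ht.le]
  ring

theorem continuousOn_term {s : Set ℝ} (hs : ∀ t ∈ s, 0 < t) : ContinuousOn (term k x) s :=
  fun t ht => (hasDerivAt_term k (hs t ht)).continuousAt.continuousWithinAt

theorem monotoneOn_term {a b : ℝ} (ha : 0 < a)
    (hq : ∀ t ∈ Ioo a b, 0 < log x - log t ∧ q k (log x - log t) ≤ 0) :
    MonotoneOn (term k x) (Icc a b) := by
  have hpos : ∀ t ∈ Icc a b, 0 < t := fun t ht => ha.trans_le ht.1
  refine monotoneOn_of_hasDerivWithinAt_nonneg (convex_Icc a b) (continuousOn_term k hpos)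
    (fun t ht => (hasDerivAt_term k (hpos t (interior_subset ht))).hasDerivWithinAt) ?_
  rw [interior_Icc]
  intro t ht
  obtain ⟨hu, hqt⟩ := hq t ht
  have hP : R' k (log x - log t) + R k (log x - log t) / 2 ≤ 0 :=
    nonpos_of_mul_nonpos_right (by
      rw [mul_R'_add_R_div_two]; exact mul_nonpos_of_nonneg_of_nonpos (by positivity) hqt) hu
  have := hpos t (Ioo_subset_Icc_self ht)
  exact div_nonneg (neg_nonneg.2 hP) (by positivity)

theorem antitoneOn_term {a b : ℝ} (ha : 0 < a)
    (hq : ∀ t ∈ Ioo a b, 0 < log x - log t ∧ 0 ≤ q k (log x - log t)) :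
    AntitoneOn (term k x) (Icc a b) := by
  have hpos : ∀ t ∈ Icc a b, 0 < t := fun t ht => ha.trans_le ht.1
  refine antitoneOn_of_hasDerivWithinAt_nonpos (convex_Icc a b) (continuousOn_term k hpos)
    (fun t ht => (hasDerivAt_term k (hpos t (interior_subset ht))).hasDerivWithinAt) ?_
  rw [interior_Icc]
  intro t ht
  obtain ⟨hu, hqt⟩ := hq t ht
  have hP : 0 ≤ R' k (log x - log t) + R k (log x - log t) / 2 :=
    nonneg_of_mul_nonneg_right (by rw [mul_R'_add_R_div_two]; positivity) hu
  have := hpos t (Ioo_subset_Icc_self ht)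
  exact div_nonpos_of_nonpos_of_nonneg (neg_nonpos.2 hP) (by positivity)

theorem log_sub_log_floor_le_one (hx : 1 ≤ x) : log x - log ⌊x⌋₊ ≤ 1 := by
  have hN : (1 : ℝ) ≤ ⌊x⌋₊ := by exact_mod_cast Nat.le_floor (by exact_mod_cast hx)
  have hx2 : x ≤ 2 * ⌊x⌋₊ := by linarith [Nat.lt_floor_add_one x]
  rw [← log_div (by positivity) (by positivity)]
  calc log (x / ⌊x⌋₊) ≤ log 2 := log_le_log (by positivity) (by rwa [div_le_iff₀ (by positivity)])
    _ ≤ 1 := by linarith [log_two_lt_d9]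

theorem exists_monotoneOn_antitoneOn_term (hx : 1 ≤ x) :
    ∃ m : ℕ, (m : ℝ) + 1 ≤ x ∧ MonotoneOn (term k x) (Icc 1 m) ∧
      AntitoneOn (term k x) (Icc (m + 1) x) := by
  set N := ⌊x⌋₊
  have hN : 1 ≤ N := Nat.le_floor (by exact_mod_cast hx)
  have hNx : (N : ℝ) ≤ x := Nat.floor_le (by linarith)
  have hqN : 0 ≤ q k (log x - log N) :=
    q_nonneg_of_le_one k (sub_nonneg.2 (log_le_log (by positivity) hNx))
      (log_sub_log_floor_le_one hx)
  -- `m` is the last integer in `[1, N]` at which `term k x` has positive derivative, or `0`.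
  set m := Nat.findGreatest (fun n : ℕ => q k (log x - log n) < 0) N with hm
  have hmN : m < N := lt_of_le_of_ne (Nat.findGreatest_le N) fun h =>
    hqN.not_gt (Nat.findGreatest_of_ne_zero (hm.symm.trans h) (by omega))
  have hmx : (m : ℝ) + 1 ≤ x := le_trans (by exact_mod_cast hmN) hNx
  have hlog : ∀ {s t : ℝ}, 0 < s → s ≤ t → log x - log t ≤ log x - log s :=
    fun hs hst => sub_le_sub_left (log_le_log hs hst) _
  refine ⟨m, hmx, monotoneOn_term k one_pos fun t ht => ?_,
    antitoneOn_term k (by positivity) fun t ht => ?_⟩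
  · have hm0 : m ≠ 0 := by exact_mod_cast (one_pos.trans (ht.1.trans ht.2)).ne'
    have hqm : q k (log x - log m) < 0 := Nat.findGreatest_of_ne_zero hm.symm hm0
    have hum : 0 < log x - log m := sub_pos.2 (log_lt_log (by positivity) (by linarith))
    refine ⟨hum.trans_le (hlog (by linarith [ht.1]) ht.2.le), not_lt.1 fun hqt => ?_⟩
    exact hqm.not_ge (q_nonneg_of_le k hum (hlog (by linarith [ht.1]) ht.2.le) hqt.le)
  · have hqm : 0 ≤ q k (log x - log (m + 1 : ℕ)) :=
      not_lt.1 (Nat.findGreatest_is_greatest (Nat.lt_succ_self m) hmN)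
    have hut : 0 < log x - log t := sub_pos.2 (log_lt_log (by linarith [ht.1]) ht.2)
    push_cast at hqm
    exact ⟨hut, q_nonneg_of_le k hut (hlog (by positivity) ht.1.le) hqm⟩

theorem term_le {t : ℝ} (ht : 1 ≤ t) (htx : t ≤ x) :
    term k x t ≤ log x ^ (2 * k) / (2 * k).factorial := by
  have hu₀ : 0 ≤ log x - log t := sub_nonneg.2 (log_le_log (by linarith) htx)
  have hu : log x - log t ≤ log x := sub_le_self _ (log_nonneg ht)
  have hlog : 0 ≤ log x := log_nonneg (ht.trans htx)
  have hR : R k (log x - log t) ≤ log x ^ (2 * k) / (2 * k).factorial :=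
    (R_le k _).trans (by gcongr)
  refine div_le_of_le_mul₀ (sqrt_nonneg t) (by positivity) (hR.trans ?_)
  exact le_mul_of_one_le_right (by positivity) (one_le_sqrt.2 ht)

theorem term_floor_nonneg (hx : 1 ≤ x) : 0 ≤ term k x ⌊x⌋₊ := by
  have hN : (1 : ℝ) ≤ ⌊x⌋₊ := by exact_mod_cast Nat.le_floor (by exact_mod_cast hx)
  exact div_nonneg (R_nonneg k (sub_nonneg.2 (log_le_log (by positivity)
    (Nat.floor_le (by linarith)))) (log_sub_log_floor_le_one hx)) (sqrt_nonneg _)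

theorem intervalIntegrable_term (hx : 0 < x) :
    IntervalIntegrable (term k x) volume 1 x :=
  (continuousOn_term k fun _ ht => lt_of_lt_of_le (lt_min one_pos hx) ht.1).intervalIntegrable

theorem integral_term (hx : 0 < x) : ∫ t in 1..x, term k x t = -Q k (log x) := by
  rw [integral_eq_sub_of_hasDerivAt
    (fun t ht => hasDerivAt_antideriv k (lt_of_lt_of_le (lt_min one_pos hx) ht.1))
    (intervalIntegrable_term k hx)]
  simp [antideriv, Q]

theorem term_eq {t : ℝ} (ht : t ≠ 0) (hx : x ≠ 0) :
    log (t / x) ^ (2 * k) / ((2 * k).factorial * √t)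
      - log (t / x) ^ (2 * k + 2) / ((2 * k + 2).factorial * 4 * √t) = term k x t := by
  have heven {n : ℕ} (hn : Even n) : (log t - log x) ^ n = (log x - log t) ^ n := by
    rw [← hn.neg_pow, neg_sub]
  rw [log_div ht hx, heven (even_two_mul k), heven ((even_two_mul k).add even_two)]
  simp only [term, R, sub_div, div_div, mul_right_comm _ (4 : ℝ)]

end LogPowerSum

open LogPowerSum in
theorem stmt_5 (x : ℝ) (hx : 1 ≤ x) (k : ℕ) :
    (∑ n ∈ Finset.Icc 1 ⌊x⌋₊,
      ((Real.log (n / x)) ^ (2 * k) / (Nat.factorial (2 * k) * Real.sqrt n)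
        - (Real.log (n / x)) ^ (2 * k + 2) / (Nat.factorial (2 * k + 2) * 4 * Real.sqrt n))) ≥ 0 := by
  have hx₀ : 0 < x := by linarith
  obtain ⟨m, hmx, hmono, hanti⟩ := exists_monotoneOn_antitoneOn_term k hx
  have key := add_integral_le_sum_Icc_floor_add hmx hmono hanti
    (fun t ht => term_le k ht.1 ht.2) (term_floor_nonneg k hx) (intervalIntegrable_term k hx₀)
  have hterm_one : term k x 1 = R k (log x) := by simp [term]
  rw [integral_term k hx₀, hterm_one] at key
  rw [Finset.sum_congr rfl fun n hn => term_eq k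
    (Nat.cast_ne_zero.2 (Nat.one_le_iff_ne_zero.1 (Finset.mem_Icc.1 hn).1)) hx₀.ne']
  linarith [pow_div_factorial_le_R_sub_Q k (log_nonneg hx)]
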